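/- arXiv:1303.3053 — 4 statements merged into one kernel-verified Lean document; each statement's English description precedes it below -/
import Mathlib

section
/- Let A be a finite nonempty set of integers with |A| = k. If |A + 2∗A| = 3k − 2, then A is an arithmetic progression. -/
/-!
List `A` as `a₀ < a₁ < ⋯ < a_{k-1}`. The `3k - 2` sums
`a₀+2a₀ < a₁+2a₀ < a₀+2a₁ < a₁+2a₁ < a₂+2a₁ < ⋯ < a_{k-1}+2a_{k-1}` are distinct elements of
`A + 2∗A`, so when `|A + 2∗A| = 3k - 2` they are all of it. Then `a_{q+2} + 2a_q` and
`a_q + 2a_{q+2}` must also be chain terms, which the order of the chain allows only if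
`a_{q+2} - a_{q+1} = a_{q+1} - a_q`.
-/

open Finset

lemma exists_strictMono_eq_image_range (A : Finset ℤ) :
    ∃ a : ℕ → ℤ, StrictMono a ∧ A = (range #A).image a := by
  induction A using Finset.induction_on_max with
  | empty => exact ⟨Nat.cast, Nat.strictMono_cast, by simp⟩
  | insert m s hlt ih =>
    obtain ⟨a, ha, hs⟩ := ih
    have hmem : ∀ i < #s, a i ∈ s := fun i hi => hs ▸ mem_image_of_mem a (mem_range.2 hi)
    refine ⟨fun i => if i < #s then a i else m + (i - #s : ℕ), ?_, ?_⟩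
    · refine strictMono_nat_of_lt_succ fun i => ?_
      by_cases hi : i + 1 < #s
      · simp only [hi, (Nat.lt_succ_self i).trans hi, if_true]
        exact ha i.lt_succ_self
      · simp only [hi, if_false]
        split_ifs with hi'
        · have : i + 1 - #s = 0 := by omega
          simpa [this] using hlt _ (hmem i hi')
        · push_cast [Nat.sub_add_comm (not_lt.1 hi')]
          omega
    · have hm : m ∉ s := fun hm => (hlt m hm).false
      rw [card_insert_of_notMem hm, range_add_one, image_insert, if_neg (lt_irrefl _),
        Nat.sub_self, Nat.cast_zero, add_zero]
      refine congrArg (insert m) (hs.trans (image_congr fun i hi => ?_))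
      simp [mem_range.1 hi]

/-- The chain `a₀+2a₀, a₁+2a₀, a₀+2a₁, a₁+2a₁, a₂+2a₁, …`, indexed by `n = 3q + r`. -/
def dilateChain (a : ℕ → ℤ) (n : ℕ) : ℤ :=
  if n % 3 = 0 then a (n / 3) + 2 * a (n / 3)
  else if n % 3 = 1 then a (n / 3 + 1) + 2 * a (n / 3)
  else a (n / 3) + 2 * a (n / 3 + 1)

namespace dilateChain

variable {a : ℕ → ℤ}

lemma three_mul (a : ℕ → ℤ) (q : ℕ) : dilateChain a (3 * q) = a q + 2 * a q := by
  simp [dilateChain]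

lemma three_mul_add_one (a : ℕ → ℤ) (q : ℕ) :
    dilateChain a (3 * q + 1) = a (q + 1) + 2 * a q := by
  simp [dilateChain, Nat.add_mod, Nat.add_div]

lemma three_mul_add_two (a : ℕ → ℤ) (q : ℕ) :
    dilateChain a (3 * q + 2) = a q + 2 * a (q + 1) := by
  simp [dilateChain, Nat.add_mod, Nat.add_div]

lemma strictMono (ha : StrictMono a) : StrictMono (dilateChain a) := by
  refine strictMono_nat_of_lt_succ fun n => ?_
  obtain ⟨q, rfl | rfl | rfl⟩ : ∃ q, n = 3 * q ∨ n = 3 * q + 1 ∨ n = 3 * q + 2 :=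
    ⟨n / 3, by omega⟩
  all_goals have := ha q.lt_succ_self
  · simp only [three_mul, three_mul_add_one]
    linarith
  · simp only [three_mul_add_one, three_mul_add_two]
    linarith
  · rw [show 3 * q + 2 + 1 = 3 * (q + 1) by ring, three_mul, three_mul_add_two]
    linarith

lemma mem_image₂ {k n : ℕ} (hn : n < 3 * k - 2) :
    dilateChain a n ∈ image₂ (fun x y => x + 2 * y) ((range k).image a) ((range k).image a) := by
  have hmem {i : ℕ} (hi : i < k) : a i ∈ (range k).image a := mem_image_of_mem a (mem_range.2 hi)
  obtain ⟨q, rfl | rfl | rfl⟩ : ∃ q, n = 3 * q ∨ n = 3 * q + 1 ∨ n = 3 * q + 2 :=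
    ⟨n / 3, by omega⟩
  · rw [three_mul]
    exact mem_image₂_of_mem (hmem (by omega)) (hmem (by omega))
  · rw [three_mul_add_one]
    exact mem_image₂_of_mem (hmem (by omega)) (hmem (by omega))
  · rw [three_mul_add_two]
    exact mem_image₂_of_mem (hmem (by omega)) (hmem (by omega))

end dilateChain

section

variable {a : ℕ → ℤ} {k : ℕ}

lemma image₂_eq_image_dilateChain (ha : StrictMono a)
    (h : #(image₂ (fun x y => x + 2 * y) ((range k).image a) ((range k).image a)) = 3 * k - 2) :
    image₂ (fun x y => x + 2 * y) ((range k).image a) ((range k).image a) =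
      (range (3 * k - 2)).image (dilateChain a) := by
  refine (eq_of_subset_of_card_le ?_ ?_).symm
  · exact image_subset_iff.2 fun n hn => dilateChain.mem_image₂ (mem_range.1 hn)
  · rw [h, card_image_of_injective _ (dilateChain.strictMono ha).injective, card_range]

/-- The sum `a_{q+2} + 2a_q` lies strictly between the chain terms `3q+1` and `3q+4`; if it is
the term `3q+3`, then `a_q + 2a_{q+2}`, strictly between the terms `3q+2` and `3q+5`, fits
nowhere. -/
lemma sub_eq_sub_of_card_image₂_eq (ha : StrictMono a)
    (h : #(image₂ (fun x y => x + 2 * y) ((range k).image a) ((range k).image a)) = 3 * k - 2)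
    {q : ℕ} (hq : q + 2 < k) : a (q + 2) - a (q + 1) = a (q + 1) - a q := by
  have hc := dilateChain.strictMono ha
  have hsum {i j : ℕ} (hi : i < k) (hj : j < k) : ∃ n, dilateChain a n = a i + 2 * a j := by
    have := mem_image₂_of_mem (f := fun x y => x + 2 * y)
      (mem_image_of_mem a (mem_range.2 hi)) (mem_image_of_mem a (mem_range.2 hj))
    rw [image₂_eq_image_dilateChain ha h] at this
    obtain ⟨n, -, hn⟩ := mem_image.1 this
    exact ⟨n, hn⟩
  have h₀ := ha (Nat.lt_succ_self q)
  have h₁ := ha (Nat.lt_succ_self (q + 1))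
  obtain ⟨n, hn⟩ := hsum (i := q + 2) (j := q) hq (by omega)
  have hn_bounds : 3 * q + 1 < n ∧ n < 3 * (q + 1) + 1 := by
    rw [← hc.lt_iff_lt, ← hc.lt_iff_lt, hn, dilateChain.three_mul_add_one,
      dilateChain.three_mul_add_one]
    constructor <;> linarith
  obtain rfl | rfl : n = 3 * q + 2 ∨ n = 3 * (q + 1) := by omega
  · rw [dilateChain.three_mul_add_two] at hn
    linarith
  obtain ⟨n', hn'⟩ := hsum (i := q) (j := q + 2) (by omega) hq
  have hn'_bounds : 3 * q + 2 < n' ∧ n' < 3 * (q + 1) + 2 := by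
    rw [← hc.lt_iff_lt, ← hc.lt_iff_lt, hn', dilateChain.three_mul_add_two,
      dilateChain.three_mul_add_two]
    constructor <;> linarith
  rw [dilateChain.three_mul] at hn
  obtain rfl | rfl : n' = 3 * (q + 1) ∨ n' = 3 * (q + 1) + 1 := by omega
  · rw [dilateChain.three_mul] at hn'
    linarith
  · rw [dilateChain.three_mul_add_one] at hn'
    linarith

lemma eq_add_mul_of_sub_eq_sub (h : ∀ q, q + 2 < k → a (q + 2) - a (q + 1) = a (q + 1) - a q) :
    ∀ i < k, a i = a 0 + i * (a 1 - a 0) := by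
  intro i
  induction i using Nat.twoStepInduction with
  | zero => simp
  | one => simp
  | more i ih ih' =>
    intro hi
    have := h i hi
    push_cast at ih' ⊢
    linarith [ih (by omega), ih' (by omega)]

end

theorem stmt2_general (A : Finset ℤ) (k : ℕ) (hk : A.card = k)
    (h : ((Finset.image₂ (fun a b => a + 2 * b) A A).card : ℤ) = 3 * k - 2) :
    ∃ u d : ℤ, A = (Finset.range k).image (fun i : ℕ => u + (i : ℤ) * d) := by
  obtain ⟨a, ha, rfl⟩ : ∃ a : ℕ → ℤ, StrictMono a ∧ A = (range k).image a :=
    hk ▸ exists_strictMono_eq_image_range A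
  have hgap q := sub_eq_sub_of_card_image₂_eq (k := k) (q := q) ha (by omega)
  exact ⟨a 0, a 1 - a 0, image_congr fun i hi => eq_add_mul_of_sub_eq_sub hgap i (mem_range.1 hi)⟩

theorem stmt2 (A : Finset ℤ) (hA : A.Nonempty) (k : ℕ) (hk : A.card = k)
    (h : ((Finset.image₂ (fun a b => a + 2 * b) A A).card : ℤ) = 3 * k - 2) :
    ∃ u d : ℤ, A = (Finset.range k).image (fun i : ℕ => u + (i : ℤ) * d) :=
  stmt2_general A k hk h
end

section
/- If S = b·a^A is a finite nonempty subset of BS(1,2), where A ⊆ ℤ is finite, then |S²| ≥ 3|S| − 2, with equality if and only if A is an arithmetic progression. -/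
open Pointwise

def BSRel (n : ℤ) : Set (FreeGroup Bool) :=
  {FreeGroup.of true * FreeGroup.of false * (FreeGroup.of false * FreeGroup.of true ^ n)⁻¹}

/-- The Baumslag–Solitar group `BS(1,n) = ⟨a, b ∣ a b = b aⁿ⟩`. -/
abbrev BS (n : ℤ) : Type := PresentedGroup (BSRel n)

noncomputable instance (n : ℤ) : DecidableEq (BS n) := Classical.decEq _

/-- The generator `a` of `BS(1,n)`. -/
def bsa (n : ℤ) : BS n := PresentedGroup.of true

/-- The generator `b` of `BS(1,n)`. -/
def bsb (n : ℤ) : BS n := PresentedGroup.of false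

/-!
The relation gives `(b aˣ)(b aʸ) = b² a^(2x + y)`, and the affine action of `BS(1,2)` on `ℚ`
(`a : t ↦ t + 1`, `b : t ↦ t / 2`) separates the elements `b aˣ` and `b² aᵐ`, so `|S| = |A|` and
`|S²| = |2·A + A|`. For `A = {a₀ < ⋯ < a_{k-1}}` the `3k - 2` sums
`3a₀ < 2a₀ + a₁ < a₀ + 2a₁ < 3a₁ < ⋯ < 3a_{k-1}` lie in `2·A + A`. If there are no others, the sums
`2aᵢ + aᵢ₊₂` and `aᵢ + 2aᵢ₊₂`, which fall strictly inside this chain, must be entries of it, and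
this forces `aᵢ₊₂ - aᵢ₊₁ = aᵢ₊₁ - aᵢ`. Conversely, an arithmetic progression `u + i d` has
`2·A + A ⊆ {3u + j d : j < 3k - 2}`.
-/

open Finset

/-- The sumset `n·A + A`; Mathlib's pointwise `(n : ℤ) • A` would be the iterated sumset
`A + ⋯ + A`, not the dilate. -/
def dilateAdd (n : ℤ) (A : Finset ℤ) : Finset ℤ :=
  image₂ (fun x y => n * x + y) A A

theorem mul_add_mem_dilateAdd {n x y : ℤ} {A : Finset ℤ} (hx : x ∈ A) (hy : y ∈ A) :
    n * x + y ∈ dilateAdd n A :=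
  mem_image₂_of_mem hx hy

section BaumslagSolitar

variable {n : ℤ}

theorem bsa_mul_bsb : bsa n * bsb n = bsb n * bsa n ^ n :=
  PresentedGroup.mk_eq_mk_of_mul_inv_mem (rels := BSRel n) rfl

theorem bsa_zpow_mul_bsb (x : ℤ) : bsa n ^ x * bsb n = bsb n * bsa n ^ (n * x) := by
  calc bsa n ^ x * bsb n = (bsb n * bsa n ^ n * (bsb n)⁻¹) ^ x * bsb n := by
        rw [← bsa_mul_bsb, mul_inv_cancel_right]
    _ = bsb n * bsa n ^ (n * x) := by rw [conj_zpow, ← zpow_mul]; group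

theorem bsb_mul_bsa_zpow_mul_bsb_mul_bsa_zpow (x y : ℤ) :
    bsb n * bsa n ^ x * (bsb n * bsa n ^ y) = bsb n ^ 2 * bsa n ^ (n * x + y) := by
  rw [mul_assoc, ← mul_assoc (bsa n ^ x), bsa_zpow_mul_bsb, zpow_add, sq]
  group

/-- `BS(1,n)` acts on `ℚ` by affine maps, `a` as `t ↦ t + 1` and `b` as `t ↦ t / n`. -/
def affineAction (hn : n ≠ 0) : BS n →* Equiv.Perm ℚ :=
  PresentedGroup.toGroup (f := fun s : Bool => cond s (Equiv.addRight 1)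
    (MulAction.toPermHom ℚˣ ℚ (Units.mk0 (n : ℚ) (by exact_mod_cast hn))⁻¹)) (by
      rintro _ rfl
      ext t
      simp [Units.smul_def]
      field_simp
      ring)

theorem affineAction_bsb_pow_mul_bsa_zpow (hn : n ≠ 0) (m : ℕ) (x : ℤ) :
    affineAction hn (bsb n ^ m * bsa n ^ x) 0 = x / n ^ m := by
  rw [map_mul, map_pow, map_zpow, affineAction, bsa, bsb, PresentedGroup.toGroup.of,
    PresentedGroup.toGroup.of, cond_true, cond_false, ← map_pow, Equiv.zsmul_addRight]
  simp [div_eq_inv_mul, Units.smul_def]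

theorem bsb_pow_mul_bsa_zpow_injective (hn : n ≠ 0) (m : ℕ) :
    Function.Injective fun x : ℤ => bsb n ^ m * bsa n ^ x := by
  intro x y hxy
  have := congrArg (fun g => affineAction hn g 0) hxy
  simp only [affineAction_bsb_pow_mul_bsa_zpow] at this
  field_simp at this
  exact_mod_cast this

theorem image_bsb_mul_bsa_zpow_mul_self (A : Finset ℤ) :
    (A.image fun x => bsb n * bsa n ^ x) * (A.image fun x => bsb n * bsa n ^ x) =
      (dilateAdd n A).image fun m => bsb n ^ 2 * bsa n ^ m := by
  show image₂ (· * ·) _ _ = _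
  simp only [dilateAdd, image₂_image_left, image₂_image_right, image_image₂,
    bsb_mul_bsa_zpow_mul_bsb_mul_bsa_zpow]

end BaumslagSolitar

theorem Finset.exists_strictMono_image_range (A : Finset ℤ) :
    ∃ a : ℕ → ℤ, StrictMono a ∧ (range #A).image a = A := by
  induction A using Finset.induction_on_max with
  | empty => exact ⟨Nat.cast, Nat.strictMono_cast, rfl⟩
  | insert M A hlt ih =>
    obtain ⟨a, ha, hA⟩ := ih
    have ha_lt (i : ℕ) (hi : i < #A) : a i < M :=
      hlt _ (hA ▸ mem_image_of_mem a (mem_range.2 hi))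
    refine ⟨fun i => if i < #A then a i else M + (i - #A : ℤ), ?_, ?_⟩
    · refine strictMono_nat_of_lt_succ fun i => ?_
      rcases lt_trichotomy (i + 1) #A with hi | hi | hi
      · simpa [hi, (Nat.lt_succ_self i).trans hi] using ha i.lt_succ_self
      · simpa [hi, show i < #A by omega] using ha_lt i (by omega)
      · simp only [show ¬ i < #A by omega, show ¬ i + 1 < #A by omega]
        push_cast
        linarith
    · rw [card_insert_of_notMem fun hM => (hlt M hM).false, range_add_one, image_insert,
        if_neg (lt_irrefl _), sub_self, add_zero]
      exact congrArg _ ((image_congr fun i hi => if_pos (mem_range.1 hi)).trans hA)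

/-- `sumChain a` runs through `3a₀, 2a₀ + a₁, a₀ + 2a₁, 3a₁, 2a₁ + a₂, …`: it is `3a` interpolated
linearly at the points of `ℕ / 3`. -/
def sumChain (a : ℕ → ℤ) (n : ℕ) : ℤ :=
  3 * a (n / 3) + (n % 3 : ℕ) * (a (n / 3 + 1) - a (n / 3))

theorem sumChain_three_mul_add (a : ℕ → ℤ) (i : ℕ) {r : ℕ} (hr : r < 3) :
    sumChain a (3 * i + r) = 3 * a i + r * (a (i + 1) - a i) := by
  have hdiv : (3 * i + r) / 3 = i := by omega
  have hmod : (3 * i + r) % 3 = r := by omega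
  rw [sumChain, hdiv, hmod]

theorem strictMono_sumChain {a : ℕ → ℤ} (ha : StrictMono a) : StrictMono (sumChain a) := by
  refine strictMono_nat_of_lt_succ fun n => ?_
  obtain ⟨i, r, hr, rfl⟩ : ∃ i r, r < 3 ∧ n = 3 * i + r :=
    ⟨n / 3, n % 3, n.mod_lt three_pos, (Nat.div_add_mod n 3).symm⟩
  have hstep := ha i.lt_succ_self
  rw [sumChain_three_mul_add a i hr]
  rcases (by omega : r < 2 ∨ r = 2) with hr2 | rfl
  · rw [add_assoc, sumChain_three_mul_add a i (by omega : r + 1 < 3)]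
    push_cast
    linarith
  · rw [show 3 * i + 2 + 1 = 3 * (i + 1) + 0 by ring, sumChain_three_mul_add a (i + 1) three_pos]
    push_cast
    linarith

theorem sumChain_mem (a : ℕ → ℤ) {k n : ℕ} (hn : n < 3 * k - 2) :
    sumChain a n ∈ dilateAdd 2 ((range k).image a) := by
  obtain ⟨i, r, hr, rfl⟩ : ∃ i r, r < 3 ∧ n = 3 * i + r :=
    ⟨n / 3, n % 3, n.mod_lt three_pos, (Nat.div_add_mod n 3).symm⟩
  have mem (j : ℕ) (hj : j < k) : a j ∈ (range k).image a := mem_image_of_mem a (mem_range.2 hj)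
  rw [sumChain_three_mul_add a i hr]
  interval_cases r
  · convert mul_add_mem_dilateAdd (mem i (by omega)) (mem i (by omega)) using 1; ring
  · convert mul_add_mem_dilateAdd (mem i (by omega)) (mem (i + 1) (by omega)) using 1
    push_cast; ring
  · convert mul_add_mem_dilateAdd (mem (i + 1) (by omega)) (mem i (by omega)) using 1
    push_cast; ring

theorem image_sumChain_subset (a : ℕ → ℤ) (k : ℕ) :
    (range (3 * k - 2)).image (sumChain a) ⊆ dilateAdd 2 ((range k).image a) := by
  intro x hx
  obtain ⟨n, hn, rfl⟩ := mem_image.1 hx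
  exact sumChain_mem a (mem_range.1 hn)

theorem sub_eq_sub_of_dilateAdd_subset {a : ℕ → ℤ} (ha : StrictMono a) {k : ℕ}
    (hsub : dilateAdd 2 ((range k).image a) ⊆ (range (3 * k - 2)).image (sumChain a))
    {i : ℕ} (hi : i + 2 < k) : a (i + 2) - a (i + 1) = a (i + 1) - a i := by
  have mem (j : ℕ) (hj : j < k) : a j ∈ (range k).image a := mem_image_of_mem a (mem_range.2 hj)
  obtain ⟨n, -, hn⟩ :=
    mem_image.1 (hsub (mul_add_mem_dilateAdd (mem i (by omega)) (mem (i + 2) hi)))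
  obtain ⟨m, -, hm⟩ :=
    mem_image.1 (hsub (mul_add_mem_dilateAdd (mem (i + 2) hi) (mem i (by omega))))
  have h₀ := ha i.lt_succ_self
  have h₁ := ha (i + 1).lt_succ_self
  have hchain := strictMono_sumChain ha
  have v := sumChain_three_mul_add a
  -- `2aᵢ + aᵢ₊₂` and `aᵢ + 2aᵢ₊₂` each lie strictly between two entries of the chain three apart
  have hn' : 3 * i + 1 < n ∧ n < 3 * (i + 1) + 1 := by
    rw [← hchain.lt_iff_lt, ← hchain.lt_iff_lt, hn, v i (by norm_num : 1 < 3),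
      v (i + 1) (by norm_num : 1 < 3)]
    push_cast
    constructor <;> linarith
  have hm' : 3 * i + 2 < m ∧ m < 3 * (i + 1) + 2 := by
    rw [← hchain.lt_iff_lt, ← hchain.lt_iff_lt, hm, v i (by norm_num : 2 < 3),
      v (i + 1) (by norm_num : 2 < 3)]
    push_cast
    constructor <;> linarith
  rcases (by omega : n = 3 * i + 2 ∨ n = 3 * (i + 1) + 0) with rfl | rfl <;>
  rcases (by omega : m = 3 * (i + 1) + 0 ∨ m = 3 * (i + 1) + 1) with rfl | rfl <;>
  · rw [v _ (by norm_num)] at hn hm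
    push_cast at hn hm
    linarith

theorem three_mul_card_le_card_dilateAdd_two_add_two (A : Finset ℤ) :
    3 * #A ≤ #(dilateAdd 2 A) + 2 := by
  obtain ⟨a, ha, hA⟩ := A.exists_strictMono_image_range
  have := card_le_card (image_sumChain_subset a #A)
  rw [hA, card_image_of_injective _ (strictMono_sumChain ha).injective, card_range] at this
  omega

theorem eq_add_mul_sub_of_sub_eq_sub {R : Type*} [CommRing R] {a : ℕ → R} {k : ℕ}
    (h : ∀ i, i + 2 < k → a (i + 2) - a (i + 1) = a (i + 1) - a i) {i : ℕ} (hi : i < k) :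
    a i = a 0 + i * (a 1 - a 0) := by
  have hstep : ∀ j, j + 1 < k → a (j + 1) - a j = a 1 - a 0 := by
    intro j hj
    induction j with
    | zero => rfl
    | succ j ih => rw [h j hj, ih (by omega)]
  induction i with
  | zero => simp
  | succ i ih =>
    push_cast
    linear_combination hstep i hi + ih (by omega)

theorem dilateAdd_two_image_subset (u d : ℤ) (k : ℕ) :
    dilateAdd 2 ((range k).image fun i : ℕ => u + i * d) ⊆
      (range (3 * k - 2)).image fun n : ℕ => 3 * u + n * d := by
  intro x hx
  simp only [dilateAdd, mem_image₂, mem_image, mem_range] at hx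
  obtain ⟨_, ⟨i, hi, rfl⟩, _, ⟨j, hj, rfl⟩, rfl⟩ := hx
  exact mem_image.2 ⟨2 * i + j, mem_range.2 (by omega), by push_cast; ring⟩

theorem card_dilateAdd_two_add_two_eq_iff {A : Finset ℤ} (hA : A.Nonempty) :
    #(dilateAdd 2 A) + 2 = 3 * #A ↔
      ∃ u d : ℤ, A = (range #A).image fun i : ℕ => u + i * d := by
  have hlow := three_mul_card_le_card_dilateAdd_two_add_two A
  constructor
  · intro hcard
    obtain ⟨a, ha, hA'⟩ := A.exists_strictMono_image_range
    have hsub := image_sumChain_subset a #A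
    rw [hA'] at hsub
    have heq := eq_of_subset_of_card_le hsub
      (by rw [card_image_of_injective _ (strictMono_sumChain ha).injective, card_range]; omega)
    have hap (i : ℕ) (hi : i + 2 < #A) :=
      sub_eq_sub_of_dilateAdd_subset ha (by rw [hA']; exact heq.ge) hi
    refine ⟨a 0, a 1 - a 0, ?_⟩
    conv_lhs => rw [← hA']
    exact image_congr fun i hi => eq_add_mul_sub_of_sub_eq_sub hap (mem_range.1 hi)
  · rintro ⟨u, d, hAP⟩
    have hup := card_le_card (dilateAdd_two_image_subset u d #A)
    rw [← hAP] at hup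
    have := (card_image_le (f := fun n : ℕ => 3 * u + n * d)).trans_eq
      (card_range (3 * #A - 2))
    have := hA.card_pos
    omega

theorem stmt9 (A : Finset ℤ) (hA : A.Nonempty) (S : Finset (BS 2))
    (hS : S = A.image (fun x => bsb 2 * bsa 2 ^ x)) :
    3 * (S.card : ℤ) - 2 ≤ (S * S).card ∧
    (((S * S).card : ℤ) = 3 * S.card - 2 ↔
      ∃ u d : ℤ, A = (Finset.range A.card).image (fun i : ℕ => u + (i : ℤ) * d)) := by
  have hcardS : #S = #A := hS ▸ card_image_of_injective _ (by
    simpa only [pow_one] using bsb_pow_mul_bsa_zpow_injective two_ne_zero 1)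
  have hcardSS : #(S * S) = #(dilateAdd 2 A) := by
    rw [hS, image_bsb_mul_bsa_zpow_mul_self,
      card_image_of_injective _ (bsb_pow_mul_bsa_zpow_injective two_ne_zero 2)]
  have hlow := three_mul_card_le_card_dilateAdd_two_add_two A
  rw [← card_dilateAdd_two_add_two_eq_iff hA, hcardS, hcardSS]
  constructor
  · omega
  · constructor <;> intro <;> omega
end

section
/- Let S ⊆ BS(1,2) be a finite set of size k = t+2 of the form S = {1, a} ∪ {b, b², ..., bᵗ} with t ≥ 2. Then |S²| = 4k − 5. -/
open Pointwise

/-!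
`BS(1,2)` acts on `ℚ` by affine maps, `a : x ↦ x + 1` and `b : x ↦ x / 2`. In any monoid the
square of `{1, a} ∪ {b, …, bᵗ}` is `{b, …, b²ᵗ} ∪ a{b, …, bᵗ} ∪ {1, a, a²} ∪ {b, …, bᵗ}a`.
In `BS(1,2)` these `2t + t + 3 + t = 4k - 5` elements are distinct: for `n ≥ 1`, `bⁿ`, `a bⁿ`
and `bⁿ a` induce `x ↦ 2⁻ⁿx`, `x ↦ 2⁻ⁿx + 1` and `x ↦ 2⁻ⁿx + 2⁻ⁿ`, while `aⁿ` induces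
`x ↦ x + n`, so the value at `0` and the slope separate the four families.
-/

open Finset

section Monoid

variable {M : Type*} [Monoid M] [DecidableEq M]

theorem Finset.image_pow_succ_range_union_mul_self (x : M) (m : ℕ) :
    (range m).image (fun i => x ^ (i + 1)) ∪
        (range m).image (fun i => x ^ (i + 1)) * (range m).image (fun i => x ^ (i + 1)) =
      (range (2 * m)).image (fun i => x ^ (i + 1)) := by
  ext y
  simp only [mem_union, mem_mul, mem_image, mem_range]
  constructor
  · rintro (⟨i, hi, rfl⟩ | ⟨_, ⟨i, hi, rfl⟩, _, ⟨j, hj, rfl⟩, rfl⟩)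
    · exact ⟨i, by omega, rfl⟩
    · exact ⟨i + j + 1, by omega, by rw [← pow_add]; ring_nf⟩
  · rintro ⟨n, hn, rfl⟩
    by_cases h : n < m
    · exact Or.inl ⟨n, h, rfl⟩
    · refine Or.inr ⟨_, ⟨m - 1, by omega, rfl⟩, _, ⟨n - m, by omega, rfl⟩, ?_⟩
      rw [← pow_add]
      congr 1
      omega

theorem Finset.pair_union_image_pow_succ_mul_self (a b : M) (t : ℕ) :
    ({1, a} ∪ (range t).image (fun i => b ^ (i + 1))) *
        ({1, a} ∪ (range t).image (fun i => b ^ (i + 1))) =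
      (range (2 * t)).image (fun i => b ^ (i + 1)) ∪
        (range t).image (fun i => a * b ^ (i + 1)) ∪ {1, a, a ^ 2} ∪
        (range t).image (fun i => b ^ (i + 1) * a) := by
  rw [← image_pow_succ_range_union_mul_self]
  ext y
  simp only [mem_union, mem_mul, mem_insert, mem_singleton, mem_image, mem_range]
  constructor
  · rintro ⟨x, hx, z, hz, rfl⟩
    rcases hx with (rfl | rfl) | ⟨i, hi, rfl⟩ <;>
      rcases hz with (rfl | rfl) | ⟨j, hj, rfl⟩ <;>
      grind [sq]
  · rintro ((((⟨i, hi, rfl⟩ | ⟨x, hx, z, hz, rfl⟩) | ⟨i, hi, rfl⟩) | (rfl | rfl | rfl)) |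
      ⟨i, hi, rfl⟩)
    · exact ⟨1, by simp, _, Or.inr ⟨i, hi, rfl⟩, one_mul _⟩
    · exact ⟨x, Or.inr hx, z, Or.inr hz, rfl⟩
    · exact ⟨a, by simp, _, Or.inr ⟨i, hi, rfl⟩, rfl⟩
    · exact ⟨1, by simp, 1, by simp, one_mul 1⟩
    · exact ⟨1, by simp, y, by simp, one_mul y⟩
    · exact ⟨a, by simp, a, by simp, (sq a).symm⟩
    · exact ⟨_, Or.inr ⟨i, hi, rfl⟩, a, by simp, rfl⟩

end Monoid

theorem Finset.disjoint_of_separated {α : Type*} {s t : Finset α} (p : α → Prop)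
    (hs : ∀ x ∈ s, p x) (ht : ∀ x ∈ t, ¬p x) : Disjoint s t :=
  disjoint_left.2 fun x hxs hxt => ht x hxt (hs x hxs)

noncomputable def bsAffineAction : BS 2 →* Equiv.Perm ℚ :=
  PresentedGroup.toGroup
    (f := fun x => if x then Equiv.addRight 1 else Equiv.divRight₀ 2 two_ne_zero) (by
      simp only [BSRel, Set.mem_singleton_iff, forall_eq, map_mul, map_inv, map_zpow,
        FreeGroup.lift_apply_of, if_true, mul_inv_eq_one]
      ext x
      simp [Equiv.divRight₀]
      ring)

@[simp]
theorem bsAffineAction_bsa_apply (x : ℚ) : bsAffineAction (bsa 2) x = x + 1 := by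
  simp [bsAffineAction, bsa]

theorem bsAffineAction_bsb_apply (x : ℚ) : bsAffineAction (bsb 2) x = x / 2 := by
  simp [bsAffineAction, bsb, Equiv.divRight₀]

-- `simp` rewrites with `map_pow` before these lemmas can fire; call it with `-map_pow`.
@[simp]
theorem bsAffineAction_bsa_pow_apply (n : ℕ) (x : ℚ) :
    bsAffineAction (bsa 2 ^ n) x = x + n := by
  induction n generalizing x with
  | zero => simp
  | succ n ih =>
    rw [pow_succ, map_mul, Equiv.Perm.mul_apply, ih, bsAffineAction_bsa_apply]
    push_cast
    ring

@[simp]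
theorem bsAffineAction_bsb_pow_apply (n : ℕ) (x : ℚ) :
    bsAffineAction (bsb 2 ^ n) x = x / 2 ^ n := by
  induction n generalizing x with
  | zero => simp
  | succ n ih =>
    rw [pow_succ, map_mul, Equiv.Perm.mul_apply, ih, bsAffineAction_bsb_apply, div_div,
      pow_succ']

theorem injective_bsb_pow : Function.Injective (bsb 2 ^ · : ℕ → BS 2) := by
  intro m n h
  have h1 := congrArg (fun g => bsAffineAction g 1) h
  simp only [bsAffineAction_bsb_pow_apply, one_div] at h1
  simpa using h1

theorem card_bsb_bsa_square (t : ℕ) :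
    #((range (2 * t)).image (fun i => bsb 2 ^ (i + 1)) ∪
        (range t).image (fun i => bsa 2 * bsb 2 ^ (i + 1)) ∪ {1, bsa 2, bsa 2 ^ 2} ∪
        (range t).image (fun i => bsb 2 ^ (i + 1) * bsa 2)) = 4 * t + 3 := by
  have hlt (i : ℕ) : ((2 : ℚ) ^ (i + 1))⁻¹ < 1 :=
    inv_lt_one_of_one_lt₀ (one_lt_pow₀ one_lt_two i.succ_ne_zero)
  have hd1 : Disjoint ((range (2 * t)).image (fun i => bsb 2 ^ (i + 1)))
      ((range t).image (fun i => bsa 2 * bsb 2 ^ (i + 1))) := by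
    refine disjoint_of_separated (fun g => bsAffineAction g 0 = 0) ?_ ?_ <;> simp [-map_pow]
  have hd2 : Disjoint ((range (2 * t)).image (fun i => bsb 2 ^ (i + 1)) ∪
      (range t).image (fun i => bsa 2 * bsb 2 ^ (i + 1))) {1, bsa 2, bsa 2 ^ 2} := by
    refine disjoint_of_separated (fun g => bsAffineAction g 1 < bsAffineAction g 0 + 1) ?_ ?_
    · simp only [forall_mem_union, forall_mem_image]
      exact ⟨fun i _ => by simpa [-map_pow] using hlt i,
        fun i _ => by simpa [-map_pow] using hlt i⟩
    · norm_num [-map_pow]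
  have hd3 : Disjoint ((range (2 * t)).image (fun i => bsb 2 ^ (i + 1)) ∪
      (range t).image (fun i => bsa 2 * bsb 2 ^ (i + 1)) ∪ {1, bsa 2, bsa 2 ^ 2})
      ((range t).image (fun i => bsb 2 ^ (i + 1) * bsa 2)) := by
    refine disjoint_of_separated (fun g => bsAffineAction g 0 ∉ Set.Ioo 0 1) ?_ ?_
    · simp only [forall_mem_union, forall_mem_image, forall_mem_insert, mem_singleton, forall_eq]
      norm_num [-map_pow]
    · simp only [forall_mem_image]
      exact fun i _ => by simpa [-map_pow] using hlt i
  have hb : Function.Injective fun i : ℕ => bsb 2 ^ (i + 1) :=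
    injective_bsb_pow.comp (add_left_injective 1)
  have hab : Function.Injective fun i : ℕ => bsa 2 * bsb 2 ^ (i + 1) :=
    (mul_right_injective _).comp hb
  have hba : Function.Injective fun i : ℕ => bsb 2 ^ (i + 1) * bsa 2 :=
    (mul_left_injective _).comp hb
  have h3 : #{1, bsa 2, bsa 2 ^ 2} = 3 := by
    refine card_eq_three.2 ⟨_, _, _, ?_, ?_, ?_, rfl⟩ <;> intro h <;>
      simpa [-map_pow] using congrArg (fun g => bsAffineAction g 0) h
  rw [card_union_of_disjoint hd3, card_union_of_disjoint hd2, card_union_of_disjoint hd1,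
    card_image_of_injective _ hb, card_image_of_injective _ hab, card_image_of_injective _ hba,
    h3, card_range, card_range]
  ring

theorem stmt15_general (t : ℕ) (k : ℕ) (hk : k = t + 2) (S : Finset (BS 2))
    (hS : S = {1, bsa 2} ∪ (Finset.range t).image (fun i => bsb 2 ^ (i + 1))) :
    ((S * S).card : ℤ) = 4 * k - 5 := by
  subst hS hk
  rw [pair_union_image_pow_succ_mul_self, card_bsb_bsa_square]
  push_cast
  ring

theorem stmt15 (t : ℕ) (ht : 2 ≤ t) (k : ℕ) (hk : k = t + 2) (S : Finset (BS 2))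
    (hS : S = {1, bsa 2} ∪ (Finset.range t).image (fun i => bsb 2 ^ (i + 1))) :
    ((S * S).card : ℤ) = 4 * k - 5 :=
  stmt15_general t k hk S hS
end

section
/- Let S ⊆ BS⁺(1,2) be finite, lying in at least two distinct cosets of ⟨a⟩, and suppose some coset bᵐ⟨a⟩ contains at least two elements of S. Then S generates a non-abelian group. -/
open Pointwise

/-!
`BS(1,2)` acts on `ℚ` by `a : z ↦ z + 1` and `b : z ↦ z / 2`, so that `bᵐaˣ` acts as
`z ↦ (z + x) / 2ᵐ` and conjugates the translation `aᵏ` into the translation by `k / 2ᵐ`.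
If `S` generated an abelian group, the element `aᵏ = p⁻¹q ≠ 1` given by the repeated coset would
commute with `s⁻¹t`, i.e. `s aᵏ s⁻¹ = t aᵏ t⁻¹`. Comparing translation lengths, `s` and `t` have
the same `b`-exponent, so `s⁻¹t ∈ ⟨a⟩`, although `s` and `t` lie in different cosets.
-/

theorem conj_eq_conj_of_commute_inv_mul {G : Type*} [Group G] {a s t : G}
    (h : Commute a (s⁻¹ * t)) : s * a * s⁻¹ = t * a * t⁻¹ := by
  calc s * a * s⁻¹ = s * (a * (s⁻¹ * t)) * t⁻¹ := by group
    _ = s * (s⁻¹ * t * a) * t⁻¹ := by rw [h.eq]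
    _ = t * a * t⁻¹ := by group

theorem Equiv.Perm.mul_addRight_mul_inv {K : Type*} [DivisionRing K] {e : Equiv.Perm K} {x c : K}
    (he : ∀ z, e z = (z + x) / c) (k : K) :
    e * Equiv.addRight k * e⁻¹ = Equiv.addRight (k / c) := by
  ext w
  have hw : e (e⁻¹ w) = w := e.apply_symm_apply w
  rw [he] at hw
  simp only [Equiv.Perm.mul_apply, Equiv.coe_addRight, he]
  rw [add_right_comm, add_div, hw]

namespace BS2

noncomputable def genAction : Bool → Equiv.Perm ℚ
  | true => Equiv.addRight 1
  | false => Equiv.divRight₀ 2 two_ne_zero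

theorem lift_genAction_rel : ∀ r ∈ BSRel 2, FreeGroup.lift genAction r = 1 := by
  rintro r rfl
  rw [map_mul, map_inv, mul_inv_eq_one]
  ext z
  simp only [map_mul, zpow_ofNat, map_pow, FreeGroup.lift_apply_of, genAction,
    Equiv.nsmul_addRight, Equiv.Perm.coe_mul, Function.comp_apply, Equiv.coe_addRight,
    Equiv.divRight₀_apply]
  ring

noncomputable def action : BS 2 →* Equiv.Perm ℚ := PresentedGroup.toGroup lift_genAction_rel

theorem action_bsa_zpow (k : ℤ) : action (bsa 2 ^ k) = Equiv.addRight (k : ℚ) := by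
  simp [action, bsa, genAction]

theorem action_bsb_pow_apply (m : ℕ) (z : ℚ) : action (bsb 2 ^ m) z = z / 2 ^ m := by
  induction m generalizing z with
  | zero => simp
  | succ m ih =>
    have hb : action (bsb 2) z = z / 2 := by simp [action, bsb, genAction]
    rw [pow_succ, map_mul, Equiv.Perm.mul_apply, hb, ih, div_div, pow_succ']

theorem action_bsb_pow_mul_bsa_zpow_apply (m : ℕ) (x : ℤ) (z : ℚ) :
    action (bsb 2 ^ m * bsa 2 ^ x) z = (z + x) / 2 ^ m := by
  rw [map_mul, Equiv.Perm.mul_apply, action_bsa_zpow, action_bsb_pow_apply, Equiv.coe_addRight]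

theorem action_conj_bsa_zpow (m : ℕ) (x k : ℤ) :
    action (bsb 2 ^ m * bsa 2 ^ x * bsa 2 ^ k * (bsb 2 ^ m * bsa 2 ^ x)⁻¹) =
      Equiv.addRight ((k : ℚ) / 2 ^ m) := by
  rw [map_mul, map_mul, map_inv, action_bsa_zpow,
    Equiv.Perm.mul_addRight_mul_inv (action_bsb_pow_mul_bsa_zpow_apply m x)]

theorem bsb_pow_eq_of_conj_bsa_zpow_eq {m n : ℕ} {x y k : ℤ} (hk : k ≠ 0)
    (h : bsb 2 ^ m * bsa 2 ^ x * bsa 2 ^ k * (bsb 2 ^ m * bsa 2 ^ x)⁻¹ =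
      bsb 2 ^ n * bsa 2 ^ y * bsa 2 ^ k * (bsb 2 ^ n * bsa 2 ^ y)⁻¹) : m = n := by
  have hlen := congrArg (fun g => action g 0) h
  simp only [action_conj_bsa_zpow, Equiv.coe_addRight, zero_add] at hlen
  have hinv : ((2 : ℚ) ^ m)⁻¹ = (2 ^ n)⁻¹ :=
    mul_left_cancel₀ (Int.cast_ne_zero.mpr hk) (by simpa only [div_eq_mul_inv] using hlen)
  exact pow_right_injective₀ two_pos (by norm_num) (inv_injective hinv)

end BS2

theorem stmt19 (S : Finset (BS 2))
    (hpos : ∀ g ∈ S, ∃ (m : ℕ) (x : ℤ), g = bsb 2 ^ m * bsa 2 ^ x)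
    (hcosets : ∃ s ∈ S, ∃ t ∈ S, s⁻¹ * t ∉ Subgroup.zpowers (bsa 2))
    (hrep : ∃ s ∈ S, ∃ t ∈ S, s ≠ t ∧ s⁻¹ * t ∈ Subgroup.zpowers (bsa 2)) :
    ¬ IsMulCommutative (Subgroup.closure (S : Set (BS 2))) := by
  intro habel
  have inv_mul_mem {s t : BS 2} (hs : s ∈ S) (ht : t ∈ S) :
      s⁻¹ * t ∈ Subgroup.closure (S : Set (BS 2)) :=
    mul_mem (inv_mem (Subgroup.subset_closure hs)) (Subgroup.subset_closure ht)
  obtain ⟨s, hs, t, ht, hst⟩ := hcosets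
  obtain ⟨p, hp, q, hq, hpq, k, hk⟩ := hrep
  have hk0 : k ≠ 0 := by
    rintro rfl
    exact hpq (inv_mul_eq_one.mp hk.symm)
  have hcomm : Commute (bsa 2 ^ k) (s⁻¹ * t) :=
    setLike_mul_comm (by simpa only [hk] using inv_mul_mem hp hq) (inv_mul_mem hs ht)
  obtain ⟨m, x, rfl⟩ := hpos s hs
  obtain ⟨n, y, rfl⟩ := hpos t ht
  obtain rfl := BS2.bsb_pow_eq_of_conj_bsa_zpow_eq hk0 (conj_eq_conj_of_commute_inv_mul hcomm)
  exact hst ⟨y - x, by group⟩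
end
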